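/- arXiv:1511.04043 — 4 statements merged into one kernel-verified Lean document; each statement's English description precedes it below -/
import Mathlib

section
/- Let G be a finite simple connected graph without isolated vertices in which every vertex has degree at most 3 and no two vertices of degree 3 are adjacent. If a function λ from the vertex set of G to ℚ satisfies the 5/3-eigenvalue equation, i.e. for every vertex v, 3·∑_{w adjacent to v}(λ(v) − λ(w)) = 5·(deg v)·λ(v), then λ is identically 0. -/
open scoped Classical in
/-- The neighborhood of a vertex `v` in a finite simple graph `G`, as a `Finset`. -/
noncomputable def nbr {V : Type*} [Fintype V] (G : SimpleGraph V) (v : V) : Finset V :=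
  Set.toFinset {w | G.Adj v w}

/-- The degree of a vertex: the number of its neighbors. -/
noncomputable def deg {V : Type*} [Fintype V] (G : SimpleGraph V) (v : V) : ℕ :=
  (nbr G v).card

/-- `lam` satisfies the 5/3-eigenvalue equation on `G`:
for every vertex `v`, `3·∑_{w ~ v} (lam v − lam w) = 5·(deg v)·lam v`. -/
def EigenEq {V : Type*} [Fintype V] {R : Type*} [CommRing R]
    (G : SimpleGraph V) (lam : V → R) : Prop :=
  ∀ v : V, (3 : R) * ∑ w ∈ nbr G v, (lam v - lam w) = 5 * ((deg G v : R)) * lam v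

lemma mem_nbr {V : Type*} [Fintype V] (G : SimpleGraph V) {v w : V} :
    w ∈ nbr G v ↔ G.Adj v w := by
  classical
  simp [nbr]

lemma sum_sub_eq {V : Type*} [Fintype V] (G : SimpleGraph V) (g : V → ℤ) (v : V) :
    ∑ w ∈ nbr G v, (g v - g w) = (deg G v : ℤ) * g v - ∑ w ∈ nbr G v, g w := by
  rw [Finset.sum_sub_distrib, Finset.sum_const, deg, nsmul_eq_mul]

lemma three_dvd_of_eigen {V : Type*} [Fintype V] (G : SimpleGraph V)
    (hiso : ∀ v : V, 0 < deg G v)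
    (hmax : ∀ v : V, deg G v ≤ 3)
    (h33 : ∀ v w : V, G.Adj v w → ¬(deg G v = 3 ∧ deg G w = 3))
    (g : V → ℤ)
    (hg : ∀ v, (3:ℤ) * ∑ w ∈ nbr G v, (g v - g w) = 5 * (deg G v : ℤ) * g v) :
    ∀ v, (3:ℤ) ∣ g v := by
  have hlow : ∀ v, deg G v ≠ 3 → (3:ℤ) ∣ g v := by
    intro v hv
    have h3 : (3:ℤ) ∣ 5 * (deg G v : ℤ) * g v := ⟨_, (hg v).symm⟩
    have hd : deg G v = 1 ∨ deg G v = 2 := by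
      have := hiso v; have := hmax v; omega
    have hnot : ¬ (3:ℤ) ∣ 5 * (deg G v : ℤ) := by
      rcases hd with h | h <;> rw [h] <;> decide
    exact (Int.prime_three.dvd_mul.mp h3).resolve_left hnot
  intro v
  by_cases hv : deg G v = 3
  · have hnb : ∀ w ∈ nbr G v, (3:ℤ) ∣ g w := fun w hw =>
      hlow w (fun h3 => h33 v w ((mem_nbr G).1 hw) ⟨hv, h3⟩)
    have hsum : (3:ℤ) ∣ ∑ w ∈ nbr G v, g w := Finset.dvd_sum hnb
    have heq := hg v
    rw [sum_sub_eq, hv] at heq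
    have hs : ∑ w ∈ nbr G v, g w = -2 * g v := by push_cast at heq; linarith
    rw [hs] at hsum
    have h2 : (3:ℤ) ∣ (-2) ∨ (3:ℤ) ∣ g v := Int.prime_three.dvd_mul.mp hsum
    exact h2.resolve_left (by decide)
  · exact hlow v hv

lemma pow_three_dvd_of_eigen {V : Type*} [Fintype V] (G : SimpleGraph V)
    (hiso : ∀ v : V, 0 < deg G v)
    (hmax : ∀ v : V, deg G v ≤ 3)
    (h33 : ∀ v w : V, G.Adj v w → ¬(deg G v = 3 ∧ deg G w = 3)) :
    ∀ n : ℕ, ∀ g : V → ℤ,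
      (∀ v, (3:ℤ) * ∑ w ∈ nbr G v, (g v - g w) = 5 * (deg G v : ℤ) * g v) →
      ∀ v, (3:ℤ)^n ∣ g v := by
  intro n
  induction n with
  | zero => intro g _ v; simp
  | succ n ih =>
    intro g hg v
    have hdvd := three_dvd_of_eigen G hiso hmax h33 g hg
    set h : V → ℤ := fun v => g v / 3 with hh
    have hgh : ∀ v, g v = 3 * h v := fun v => (Int.mul_ediv_cancel' (hdvd v)).symm
    have hP : ∀ v, (3:ℤ) * ∑ w ∈ nbr G v, (h v - h w) = 5 * (deg G v : ℤ) * h v := by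
      intro u
      have hs : ∑ w ∈ nbr G u, (g u - g w) = 3 * ∑ w ∈ nbr G u, (h u - h w) := by
        rw [Finset.mul_sum]
        apply Finset.sum_congr rfl
        intro w _
        rw [hgh u, hgh w]; ring
      have h2 : (3:ℤ) * ((3:ℤ) * ∑ w ∈ nbr G u, (h u - h w)) =
          (3:ℤ) * (5 * (deg G u : ℤ) * h u) := by
        calc (3:ℤ) * ((3:ℤ) * ∑ w ∈ nbr G u, (h u - h w))
            = (3:ℤ) * ∑ w ∈ nbr G u, (g u - g w) := by rw [hs]
          _ = 5 * (deg G u : ℤ) * g u := hg u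
          _ = (3:ℤ) * (5 * (deg G u : ℤ) * h u) := by rw [hgh u]; ring
      exact mul_left_cancel₀ (by norm_num) h2
    have hhd : (3:ℤ)^n ∣ h v := ih h hP v
    rw [hgh v, pow_succ']
    exact mul_dvd_mul_left 3 hhd

lemma int_eq_zero_of_forall_pow_dvd {x : ℤ} (h : ∀ n : ℕ, (3:ℤ)^n ∣ x) : x = 0 := by
  by_contra hx
  set n := x.natAbs with hn
  have h1 : (3:ℤ)^n ∣ x := h n
  have h2 : (3:ℤ)^n ≤ |x| := Int.le_of_dvd (abs_pos.mpr hx) ((dvd_abs _ _).mpr h1)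
  have h3 : |x| = (n : ℤ) := by rw [hn, Int.abs_eq_natAbs]
  have h4 : (n : ℤ) < (3:ℤ)^n := by
    have := Nat.lt_pow_self (n := n) (by norm_num : 1 < 3)
    exact_mod_cast this
  omega

/-- Let `G` be a finite simple connected graph without isolated vertices in which every
vertex has degree at most 3 and no two vertices of degree 3 are adjacent.  If
`lam : V → ℚ` satisfies the 5/3-eigenvalue equation, then `lam` is identically `0`. -/
theorem eigen_five_thirds_rat_eq_zero {V : Type*} [Fintype V] (G : SimpleGraph V)
    (hconn : G.Connected)
    (hiso : ∀ v : V, 0 < deg G v)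
    (hmax : ∀ v : V, deg G v ≤ 3)
    (h33 : ∀ v w : V, G.Adj v w → ¬(deg G v = 3 ∧ deg G w = 3))
    (lam : V → ℚ) (hlam : EigenEq G lam) :
    ∀ v : V, lam v = 0 := by
  classical
  set D : ℕ := ∏ v : V, (lam v).den with hD
  have hDdvd : ∀ v : V, (lam v).den ∣ D := fun v =>
    Finset.dvd_prod_of_mem _ (Finset.mem_univ v)
  have hDpos : 0 < D := Finset.prod_pos (fun v _ => (lam v).pos)
  set g : V → ℤ := fun v => (lam v).num * ((D / (lam v).den : ℕ) : ℤ) with hg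
  have hcast : ∀ v, (g v : ℚ) = lam v * D := by
    intro v
    have hmul : ((lam v).den : ℚ) * ((D / (lam v).den : ℕ) : ℚ) = (D : ℚ) := by
      rw [← Nat.cast_mul, Nat.mul_div_cancel' (hDdvd v)]
    have hden : ((lam v).den : ℚ) ≠ 0 := by
      exact_mod_cast (lam v).den_nz
    have hnum : ((lam v).num : ℚ) = lam v * (lam v).den :=
      ((div_eq_iff hden).mp (Rat.num_div_den (lam v)))
    calc (g v : ℚ) = ((lam v).num : ℚ) * ((D / (lam v).den : ℕ) : ℚ) := by
          rw [hg]
          simp only [Int.cast_mul, Int.cast_natCast]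
      _ = lam v * (((lam v).den : ℚ) * ((D / (lam v).den : ℕ) : ℚ)) := by
          rw [hnum]; ring
      _ = lam v * D := by rw [hmul]
  have hgeq : ∀ v, (3:ℤ) * ∑ w ∈ nbr G v, (g v - g w) = 5 * (deg G v : ℤ) * g v := by
    intro v
    have hq := hlam v
    have hsum : ∑ w ∈ nbr G v, (lam v * D - lam w * D)
        = (∑ w ∈ nbr G v, (lam v - lam w)) * (D : ℚ) := by
      rw [Finset.sum_mul]
      apply Finset.sum_congr rfl
      intro w _
      ring
    have hQ : (3:ℚ) * ∑ w ∈ nbr G v, (lam v * D - lam w * D)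
        = 5 * (deg G v : ℚ) * (lam v * D) := by
      rw [hsum]
      calc (3:ℚ) * ((∑ w ∈ nbr G v, (lam v - lam w)) * D)
          = ((3:ℚ) * ∑ w ∈ nbr G v, (lam v - lam w)) * D := by ring
        _ = (5 * (deg G v : ℚ) * lam v) * D := by rw [hq]
        _ = 5 * (deg G v : ℚ) * (lam v * D) := by ring
    have hcast2 : (((3:ℤ) * ∑ w ∈ nbr G v, (g v - g w) : ℤ) : ℚ)
        = ((5 * (deg G v : ℤ) * g v : ℤ) : ℚ) := by
      push_cast
      simpa [hcast] using hQ
    exact_mod_cast hcast2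
  have hzero : ∀ v, g v = 0 := fun v =>
    int_eq_zero_of_forall_pow_dvd
      (fun n => pow_three_dvd_of_eigen G hiso hmax h33 n g hgeq v)
  intro v
  have h0 := hcast v
  rw [hzero v] at h0
  have hD0 : (D : ℚ) ≠ 0 := by positivity
  have h1 : lam v * D = 0 := by exact_mod_cast h0.symm
  exact (mul_eq_zero.mp h1).resolve_right hD0
end

section
/- Let G be a finite simple graph and λ a function from its vertex set to ℚ satisfying the 5/3-eigenvalue equation, equivalently 3·∑_{w adjacent to v} λ(w) = −2·(deg v)·λ(v) for every vertex v. If v is a vertex of degree 3 with λ(v) ≠ 0, then v has a neighbor w with λ(w) ≠ 0 whose 3-adic valuation satisfies v₃(λ(w)) ≤ v₃(λ(v)), where v₃ denotes the 3-adic valuation on ℚ. -/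
private lemma sum_val_aux {V : Type*} (f : V → ℚ) (k : ℤ) (s : Finset V)
    (h : ∀ w ∈ s, f w = 0 ∨ k < padicValRat 3 (f w)) :
    (∑ w ∈ s, f w = 0) ∨ k < padicValRat 3 (∑ w ∈ s, f w) := by
  haveI : Fact (Nat.Prime 3) := ⟨by norm_num⟩
  classical
  induction s using Finset.induction with
  | empty => simp
  | @insert a s ha ih =>
    rw [Finset.sum_insert ha]
    have hrest := ih (fun w hw => h w (Finset.mem_insert_of_mem hw))
    have ha' := h a (Finset.mem_insert_self a s)
    by_cases hsum : f a + ∑ w ∈ s, f w = 0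
    · exact Or.inl hsum
    · right
      rcases ha' with h0 | hlt
      · rw [h0, zero_add] at hsum ⊢
        exact hrest.resolve_left hsum
      · rcases hrest with h0 | hlt'
        · rw [h0, add_zero] at hsum ⊢
          exact hlt
        · exact lt_of_lt_of_le (lt_min hlt hlt')
            (padicValRat.min_le_padicValRat_add hsum)

/-- Let `G` be a finite simple graph and `lam : V → ℚ` a function satisfying the
5/3-eigenvalue equation (equivalently, `3·∑_{w ~ v} lam w = −2·(deg v)·lam v` for all `v`).
If `v` is a vertex of degree 3 with `lam v ≠ 0`, then `v` has a neighbor `w` with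
`lam w ≠ 0` whose 3-adic valuation satisfies `v₃(lam w) ≤ v₃(lam v)`. -/
theorem exists_neighbor_three_adic_le {V : Type*} [Fintype V] (G : SimpleGraph V)
    (lam : V → ℚ) (hlam : EigenEq G lam)
    (v : V) (hdeg : deg G v = 3) (hv : lam v ≠ 0) :
    ∃ w ∈ nbr G v, lam w ≠ 0 ∧ padicValRat 3 (lam w) ≤ padicValRat 3 (lam v) := by
  haveI : Fact (Nat.Prime 3) := ⟨by norm_num⟩
  have heq := hlam v
  rw [hdeg] at heq
  have hsum : ∑ w ∈ nbr G v, lam w = -2 * lam v := by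
    have hc : (∑ w ∈ nbr G v, (lam v - lam w))
        = (nbr G v).card • lam v - ∑ w ∈ nbr G v, lam w := by
      rw [Finset.sum_sub_distrib, Finset.sum_const]
    rw [hc] at heq
    have hcard : (nbr G v).card = 3 := hdeg
    rw [hcard] at heq
    rw [nsmul_eq_mul] at heq
    push_cast at heq
    linarith
  have hval : padicValRat 3 (∑ w ∈ nbr G v, lam w) = padicValRat 3 (lam v) := by
    rw [hsum, padicValRat.mul (by norm_num) hv]
    have : padicValRat 3 (-2) = 0 := by
      rw [show (-2 : ℚ) = -(2:ℚ) by ring, padicValRat.neg]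
      rw [show (2:ℚ) = ((2:ℤ):ℚ) by norm_num, padicValRat.of_int]
      rw [padicValInt.eq_zero_of_not_dvd (by norm_num)]
      rfl
    rw [this, zero_add]
  have hne : ∑ w ∈ nbr G v, lam w ≠ 0 := by
    rw [hsum]; intro h
    rcases mul_eq_zero.mp h with h2 | h2
    · norm_num at h2
    · exact hv h2
  by_contra hcon
  push_neg at hcon
  have : ∀ w ∈ nbr G v, lam w = 0 ∨ padicValRat 3 (lam v) < padicValRat 3 (lam w) := by
    intro w hw
    by_cases h0 : lam w = 0
    · exact Or.inl h0
    · exact Or.inr (hcon w hw h0)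
  rcases sum_val_aux lam (padicValRat 3 (lam v)) (nbr G v) this with h0 | hlt
  · exact hne h0
  · rw [hval] at hlt; exact lt_irrefl _ hlt
end

section
/- Define f : ℤ/11ℤ → ℤ/23ℤ by f(k) = 2^k (well-defined since 2 has order 11 in (ℤ/23ℤ)ˣ, i.e. 2¹¹ ≡ 1 mod 23). Then f is injective, and for every k ∈ ℤ/11ℤ one has 3·(f(k−1) + f(k+1)) = −4·f(k) in ℤ/23ℤ; equivalently, on the cycle graph with vertex set ℤ/11ℤ (where k is adjacent to k−1 and k+1), f satisfies the 5/3-eigenvalue equation 3·∑_{w adjacent to v}(f(v) − f(w)) = 5·(deg v)·f(v) over the field 𝔽₂₃, and f takes distinct values at any two vertices at graph distance 1 or 2. -/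
/-- The cycle graph on `ℤ/11ℤ`: `k` is adjacent exactly to `k − 1` and `k + 1`. -/
def C11 : SimpleGraph (ZMod 11) where
  Adj v w := w = v + 1 ∨ v = w + 1
  symm := by constructor; intro v w h; exact h.symm
  loopless := by
    constructor
    intro v h
    rcases h with h | h <;>
    · exact absurd (left_eq_add.mp h) (by decide)

/-- `f : ℤ/11ℤ → ℤ/23ℤ`, `f(k) = 2^k`. -/
def f (k : ZMod 11) : ZMod 23 := (2 : ZMod 23) ^ k.val

/-- `f(k) = 2^k` is well defined (`2¹¹ ≡ 1 mod 23`), injective, satisfies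
`3·(f(k−1) + f(k+1)) = −4·f(k)` in `ℤ/23ℤ`, i.e. the 5/3-eigenvalue equation on the
cycle graph on `ℤ/11ℤ` over `𝔽₂₃`, and takes distinct values at any two vertices at
graph distance 1 or 2. -/
theorem cycle_eigenvector_f :
    ((2 : ZMod 23) ^ (11 : ℕ) = 1) ∧
    Function.Injective f ∧
    (∀ k : ZMod 11, 3 * (f (k - 1) + f (k + 1)) = -4 * f k) ∧
    EigenEq C11 f ∧
    (∀ v w : ZMod 11, C11.dist v w = 1 ∨ C11.dist v w = 2 → f v ≠ f w) := by
  have hinj : Function.Injective f := by decide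
  have hnbr : ∀ v : ZMod 11, nbr C11 v = {v + 1, v - 1} := by
    intro v
    ext w
    simp only [nbr, Set.mem_toFinset]
    simp only [nbr, Set.mem_toFinset, Set.mem_setOf_eq, C11, Finset.mem_insert,
      Finset.mem_singleton, eq_sub_iff_add_eq, eq_comm (a := v) (b := w + 1)]
  have heq : ∀ k : ZMod 11, 3 * (f (k - 1) + f (k + 1)) = -4 * f k := by decide
  refine ⟨by decide, hinj, heq, ?_, ?_⟩
  · intro v
    have hne : v + 1 ≠ v - 1 := by
      intro h
      have : (2 : ZMod 11) = 0 := by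
        have := sub_eq_zero.mpr h
        ring_nf at this ⊢
        linear_combination this
      exact absurd this (by decide)
    rw [hnbr v, deg, hnbr v]
    rw [Finset.sum_pair hne, Finset.card_pair hne]
    push_cast
    linear_combination -(heq v)
  · intro v w h hfvw
    rcases h with h | h <;> simp [hinj hfvw, SimpleGraph.dist_self] at h
end

section
/- There exist a prime number p ≥ 7, finite simple connected graphs G₁, G₂, G₃ without isolated vertices, functions λ̂ᵢ from the vertex set of Gᵢ to 𝔽_p = ℤ/pℤ (i = 1,2,3), and elements a, b ∈ 𝔽_p such that: (i) in each Gᵢ every vertex has degree at most 3 and no two vertices of degree 3 are adjacent; (ii) the numbers of edges |E(G₁)| and |E(G₂)| are coprime; (iii) the first Betti numbers satisfy |E(G₁)| − |V(G₁)| + 1 = 1, |E(G₂)| − |V(G₂)| + 1 = 1, and |E(G₃)| − |V(G₃)| + 1 = 2; (iv) each λ̂ᵢ satisfies the 5/3-eigenvalue equation on Gᵢ over 𝔽_p; (v) λ̂ᵢ(v) ≠ λ̂ᵢ(w) whenever the graph distance between vertices v and w of Gᵢ is 1 or 2; (vi) each λ̂ᵢ is a strongly irreducible solution; and (vii) each Gᵢ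 contains an edge [vw] with deg v = deg w = 2, λ̂ᵢ(v) = a and λ̂ᵢ(w) = b. -/
noncomputable def ecard {V : Type*} (G : SimpleGraph V) : ℕ :=
  G.edgeSet.ncard

def StronglyIrred {V : Type*} [Fintype V] [DecidableEq V] {R : Type*} [CommRing R]
    (G : SimpleGraph V) (lam : V → R) : Prop :=
  ∀ (H : Finset V) (v : V), v ∈ H →
    (3 : R) * ∑ w ∈ nbr G v ∩ H, (lam v - lam w)
      = 5 * (((nbr G v ∩ H).card : R)) * lam v →
    (nbr G v ∩ H = ∅ ∨ nbr G v ∩ H = nbr G v)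

def GoodBlock {n p : ℕ} (G : SimpleGraph (Fin n)) (lam : Fin n → ZMod p)
    (a b : ZMod p) : Prop :=
  G.Connected ∧
  (∀ v, 0 < deg G v) ∧
  (∀ v, deg G v ≤ 3) ∧
  (∀ v w, G.Adj v w → ¬(deg G v = 3 ∧ deg G w = 3)) ∧
  EigenEq G lam ∧
  (∀ v w, G.dist v w = 1 ∨ G.dist v w = 2 → lam v ≠ lam w) ∧
  StronglyIrred G lam ∧
  (∃ v w, G.Adj v w ∧ deg G v = 2 ∧ deg G w = 2 ∧ lam v = a ∧ lam w = b)

-- auxiliary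
def mkG {n : ℕ} (E : List (Fin n × Fin n)) : SimpleGraph (Fin n) where
  Adj v w := v ≠ w ∧ ((v, w) ∈ E ∨ (w, v) ∈ E)
  symm := by constructor; intro v w ⟨h1, h2⟩; exact ⟨h1.symm, h2.symm⟩
  loopless := by constructor; intro v ⟨h1, _⟩; exact h1 rfl

instance mkG_dec {n : ℕ} (E : List (Fin n × Fin n)) : DecidableRel (mkG E).Adj :=
  fun v w => inferInstanceAs (Decidable (_ ∧ _))

lemma nbr_eq {V : Type*} [Fintype V] [DecidableEq V] (G : SimpleGraph V)
    [DecidableRel G.Adj] (v : V) :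
    nbr G v = Finset.univ.filter (fun w => G.Adj v w) := by
  ext w; simp [nbr]

lemma nbr_eq' {V : Type*} [Fintype V] [DecidableEq V] (G : SimpleGraph V)
    [DecidableRel G.Adj] (v : V) :
    nbr G v = G.neighborFinset v := by
  ext w; simp [nbr]

lemma deg_eq {V : Type*} [Fintype V] [DecidableEq V] (G : SimpleGraph V)
    [DecidableRel G.Adj] (v : V) : deg G v = G.degree v := by
  rw [deg, nbr_eq']; rfl

lemma two_mul_ecard {V : Type*} [Fintype V] [DecidableEq V] (G : SimpleGraph V)
    [DecidableRel G.Adj] : 2 * ecard G = ∑ v, deg G v := by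
  rw [ecard, Set.ncard_eq_toFinset_card']
  have h := G.sum_degrees_eq_twice_card_edges
  simp only [deg_eq]
  rw [h]; congr 2

lemma connected_of_chain {n : ℕ} (G : SimpleGraph (Fin n)) (hn : 0 < n)
    (h : ∀ k : Fin n, 0 < k.val → ∃ j : Fin n, j.val < k.val ∧ G.Adj j k) :
    G.Connected := by
  have key : ∀ m : ℕ, ∀ k : Fin n, k.val = m → G.Reachable ⟨0, hn⟩ k := by
    intro m
    induction m using Nat.strong_induction_on with
    | _ m ih =>
      intro k hk
      rcases Nat.eq_zero_or_pos m with h0 | hpos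
      · have : k = ⟨0, hn⟩ := by apply Fin.ext; simp [hk, h0]
        rw [this]
      · obtain ⟨j, hj, hadj⟩ := h k (hk ▸ hpos)
        exact (ih j.val (hk ▸ hj) j rfl).trans hadj.reachable
  have : Nonempty (Fin n) := ⟨⟨0, hn⟩⟩
  exact SimpleGraph.Connected.mk (fun u v => (key u.val u rfl).symm.trans (key v.val v rfl))

lemma dist_cond {V : Type*} [Fintype V] (G : SimpleGraph V) {R : Type*} (lam : V → R)
    (h : ∀ v w, v ≠ w → (G.Adj v w ∨ ∃ u, G.Adj v u ∧ G.Adj u w) → lam v ≠ lam w) :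
    ∀ v w, G.dist v w = 1 ∨ G.dist v w = 2 → lam v ≠ lam w := by
  intro v w hd
  have hdn : G.dist v w ≠ 0 := by rcases hd with h1 | h2 <;> omega
  have hne : v ≠ w := by
    rintro rfl
    exact hdn (SimpleGraph.dist_self)
  have hreach : G.Reachable v w := by
    by_contra hr
    exact hdn (SimpleGraph.dist_eq_zero_of_not_reachable hr)
  obtain ⟨p, hp⟩ := hreach.exists_walk_length_eq_dist
  apply h v w hne
  rcases hd with h1 | h2
  · rw [h1] at hp
    cases p with
    | nil => simp at hp
    | cons hadj q =>
      simp only [SimpleGraph.Walk.length_cons, Nat.add_eq_right] at hp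
      have := SimpleGraph.Walk.eq_of_length_eq_zero hp
      subst this
      exact Or.inl hadj
  · rw [h2] at hp
    cases p with
    | nil => simp at hp
    | cons hadj q =>
      cases q with
      | nil => simp at hp
      | cons hadj2 q2 =>
        simp only [SimpleGraph.Walk.length_cons] at hp
        have hq2 : q2.length = 0 := by omega
        have := SimpleGraph.Walk.eq_of_length_eq_zero hq2
        subst this
        exact Or.inr ⟨_, hadj, hadj2⟩

lemma stronglyIrred_of {V : Type*} [Fintype V] [DecidableEq V] {R : Type*} [CommRing R]
    (G : SimpleGraph V) (lam : V → R)
    (hdeg : ∀ v, (nbr G v).card ≤ 3)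
    (h1 : ∀ v, ∀ w ∈ nbr G v, ({w} : Finset V) ≠ nbr G v →
        (3 : R) * (lam v - lam w) ≠ 5 * lam v)
    (h2 : ∀ v, ∀ w₁ ∈ nbr G v, ∀ w₂ ∈ nbr G v, w₁ ≠ w₂ →
        ({w₁, w₂} : Finset V) ≠ nbr G v →
        (3 : R) * ((lam v - lam w₁) + (lam v - lam w₂)) ≠ 10 * lam v) :
    StronglyIrred G lam := by
  intro H v _ heq
  by_contra hcon
  push_neg at hcon
  obtain ⟨hne, hnfull⟩ := hcon
  set S := nbr G v ∩ H with hS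
  have hsub : S ⊆ nbr G v := Finset.inter_subset_left
  have hlt : S.card < (nbr G v).card :=
    Finset.card_lt_card (hsub.ssubset_of_ne hnfull)
  have hge : 1 ≤ S.card := Finset.card_pos.mpr hne
  have hd := hdeg v
  have hcase : S.card = 1 ∨ S.card = 2 := by omega
  rcases hcase with hc | hc
  · obtain ⟨w, hw⟩ := Finset.card_eq_one.mp hc
    rw [hw] at heq
    rw [Finset.sum_singleton, Finset.card_singleton, Nat.cast_one, mul_one] at heq
    exact h1 v w (hsub (hw ▸ Finset.mem_singleton_self w)) (hw ▸ hnfull) heq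
  · obtain ⟨w₁, w₂, hne12, hw⟩ := Finset.card_eq_two.mp hc
    rw [hw] at heq
    rw [Finset.sum_pair hne12, Finset.card_insert_of_notMem (by simp [hne12]),
      Finset.card_singleton] at heq
    norm_num at heq
    have hm1 : w₁ ∈ S := hw ▸ (Finset.mem_insert_self w₁ {w₂})
    have hm2 : w₂ ∈ S := hw ▸ (Finset.mem_insert_of_mem (Finset.mem_singleton_self w₂))
    exact h2 v w₁ (hsub hm1) w₂ (hsub hm2) hne12 (hw ▸ hnfull) heq

def E1 : List (Fin 9 × Fin 9) :=
  [(0,1),(1,2),(2,3),(3,4),(4,5),(5,6),(6,0),(0,7),(3,8)]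
def E2 : List (Fin 11 × Fin 11) :=
  [(0,1),(1,2),(2,3),(3,4),(4,5),(5,6),(6,0),(0,7),(2,8),(8,9),(9,10)]
def E3 : List (Fin 11 × Fin 11) :=
  [(0,1),(0,2),(0,3),(1,4),(2,5),(3,6),(4,7),(4,8),(5,7),(6,9),(8,10),(9,10)]

def L1 : Fin 9 → ZMod 13 := ![10,9,4,3,1,0,12,11,2]
def L2 : Fin 11 → ZMod 13 := ![8,6,10,12,0,1,3,1,1,6,4]
def L3 : Fin 11 → ZMod 13 := ![5,0,6,10,8,0,12,7,3,0,1]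


def N1 : Fin 9 → Finset (Fin 9) := ![{1,6,7}, {0,2}, {1,3}, {2,4,8}, {3,5}, {4,6}, {0,5}, {0}, {3}]
def N2 : Fin 11 → Finset (Fin 11) := ![{1,6,7}, {0,2}, {1,3,8}, {2,4}, {3,5}, {4,6}, {0,5}, {0}, {2,9}, {8,10}, {9}]
def N3 : Fin 11 → Finset (Fin 11) := ![{1,2,3}, {0,4}, {0,5}, {0,6}, {1,7,8}, {2,7}, {3,9}, {4,5}, {4,10}, {6,10}, {8,9}]

set_option maxRecDepth 40000

lemma hn1 : ∀ v, nbr (mkG E1) v = N1 v := by simp only [nbr_eq]; decide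
lemma hn2 : ∀ v, nbr (mkG E2) v = N2 v := by simp only [nbr_eq]; decide
lemma hn3 : ∀ v, nbr (mkG E3) v = N3 v := by simp only [nbr_eq]; decide

lemma good1 : GoodBlock (mkG E1) L1 0 1 := by
  refine ⟨?_, ?_, ?_, ?_, ?_, ?_, ?_, ?_⟩
  · exact connected_of_chain _ (by norm_num) (by decide)
  · simp only [deg, hn1]; decide
  · simp only [deg, hn1]; decide
  · simp only [deg, hn1]; decide
  · simp only [EigenEq, deg, hn1]; decide
  · exact dist_cond _ _ (by decide)
  · refine stronglyIrred_of _ _ ?_ ?_ ?_ <;> simp only [hn1] <;> decide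
  · refine ⟨5, 4, ?_⟩; simp only [deg, hn1]; exact ⟨by decide, by decide, by decide, by decide, by decide⟩

lemma good2 : GoodBlock (mkG E2) L2 0 1 := by
  refine ⟨?_, ?_, ?_, ?_, ?_, ?_, ?_, ?_⟩
  · exact connected_of_chain _ (by norm_num) (by decide)
  · simp only [deg, hn2]; decide
  · simp only [deg, hn2]; decide
  · simp only [deg, hn2]; decide
  · simp only [EigenEq, deg, hn2]; decide
  · exact dist_cond _ _ (by decide)
  · refine stronglyIrred_of _ _ ?_ ?_ ?_ <;> simp only [hn2] <;> decide
  · refine ⟨4, 5, ?_⟩; simp only [deg, hn2]; exact ⟨by decide, by decide, by decide, by decide, by decide⟩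

lemma good3 : GoodBlock (mkG E3) L3 0 1 := by
  refine ⟨?_, ?_, ?_, ?_, ?_, ?_, ?_, ?_⟩
  · exact connected_of_chain _ (by norm_num) (by decide)
  · simp only [deg, hn3]; decide
  · simp only [deg, hn3]; decide
  · simp only [deg, hn3]; decide
  · simp only [EigenEq, deg, hn3]; decide
  · exact dist_cond _ _ (by decide)
  · refine stronglyIrred_of _ _ ?_ ?_ ?_ <;> simp only [hn3] <;> decide
  · refine ⟨9, 10, ?_⟩; simp only [deg, hn3]; exact ⟨by decide, by decide, by decide, by decide, by decide⟩

lemma ecard1 : ecard (mkG E1) = 9 := by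
  have h := two_mul_ecard (mkG E1)
  have hs : ∑ v, deg (mkG E1) v = 18 := by simp only [deg, hn1]; decide
  omega

lemma ecard2 : ecard (mkG E2) = 11 := by
  have h := two_mul_ecard (mkG E2)
  have hs : ∑ v, deg (mkG E2) v = 22 := by simp only [deg, hn2]; decide
  omega

lemma ecard3 : ecard (mkG E3) = 12 := by
  have h := two_mul_ecard (mkG E3)
  have hs : ∑ v, deg (mkG E3) v = 24 := by simp only [deg, hn3]; decide
  omega

/-- There exist a prime `p ≥ 7`, finite simple connected graphs `G₁, G₂, G₃` without
isolated vertices, functions `λ̂ᵢ : V(Gᵢ) → 𝔽_p`, and elements `a, b ∈ 𝔽_p` satisfying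
all the conditions of Claim 3.8: degrees at most 3 with no two adjacent vertices of
degree 3, `|E(G₁)|` and `|E(G₂)|` coprime, first Betti numbers `1, 1, 2` respectively,
each `λ̂ᵢ` a 5/3-eigenvector over `𝔽_p`, with distinct values at distance ≤ 2, strongly
irreducible, and each `Gᵢ` containing an edge `[vw]` with both endpoints of degree 2 on
which `λ̂ᵢ` takes the values `a`, `b`. -/
theorem exists_good_blocks :
    ∃ (p : ℕ), p.Prime ∧ 7 ≤ p ∧
    ∃ (n₁ n₂ n₃ : ℕ)
      (G₁ : SimpleGraph (Fin n₁)) (G₂ : SimpleGraph (Fin n₂)) (G₃ : SimpleGraph (Fin n₃))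
      (lam₁ : Fin n₁ → ZMod p) (lam₂ : Fin n₂ → ZMod p) (lam₃ : Fin n₃ → ZMod p)
      (a b : ZMod p),
      GoodBlock G₁ lam₁ a b ∧ GoodBlock G₂ lam₂ a b ∧ GoodBlock G₃ lam₃ a b ∧
      Nat.Coprime (ecard G₁) (ecard G₂) ∧
      ecard G₁ + 1 = 1 + n₁ ∧ ecard G₂ + 1 = 1 + n₂ ∧ ecard G₃ + 1 = 2 + n₃ := by
  refine ⟨13, by norm_num, by norm_num, 9, 11, 11, mkG E1, mkG E2, mkG E3,
    L1, L2, L3, 0, 1, good1, good2, good3, ?_, ?_, ?_, ?_⟩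
  · rw [ecard1, ecard2]; decide
  · rw [ecard1]
  · rw [ecard2]
  · rw [ecard3]
end
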